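/- Let m, N_L, N_R be positive integers, let w ∈ ℝ^{m×(N_L+N_R)} be a fixed weight matrix, let μ_1, …, μ_{N_L+N_R} ∈ ℝ^m be centers with μ_j ≠ μ_l for every j ≠ l, let α_1, …, α_{N_L+N_R} ∈ (0,∞)^m be fixed strictly positive base steepness vectors, fix l ∈ {N_L+1, …, N_L+N_R}, and let y ∈ ℝ^m satisfy y_i ≠ μ_{ji} for every i = 1, …, m and every j = 1, …, N_L+N_R. For t > 0 define the vector field F^t: ℝ^m → ℝ^m by F^t_i(z) := Σ_{j=1}^{N_L} w_{ij} Λ(z; μ_j, tα_j) + Σ_{k=N_L+1}^{N_L+N_R} w_{ik} P(z; μ_k, tα_k). Then the Lie derivative of the conjunctive RBF, ∇_y P(y; μ_l, tα_l) · F^t(y), minus the combination Σ_{i=1}^m Σ_{j=1}^{N_L} tα_{li} w_{ij} (1 − 2λ(y_i; μ_{li}, tα_{li})) H(y; (μ_j, tα_j), (μ_l, tα_l)), converges to 0 exponentially as t → ∞: there exist constants C, c > 0 such that the absolute value of this difference is at most C·exp(−c·t) for all t ≥ 1. -/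

import Mathlib

open MeasureTheory ProbabilityTheory Real

noncomputable def logisticFun (y μ α : ℝ) : ℝ := 1 / (1 + Real.exp (-α * (y - μ)))

noncomputable def rbfFun (y μ α : ℝ) : ℝ :=
  Real.exp (-α * (y - μ)) / (1 + Real.exp (-α * (y - μ))) ^ 2

noncomputable def conjLog {m : ℕ} (y μ α : Fin m → ℝ) : ℝ :=
  ∏ i, logisticFun (y i) (μ i) (α i)

noncomputable def conjRBF {m : ℕ} (y μ α : Fin m → ℝ) : ℝ :=
  ∏ i, rbfFun (y i) (μ i) (α i)

open scoped Classical in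
/-- Decision function `H(y; (μl, αl), (μk, αk))`. -/
noncomputable def decisionH {m : ℕ} (y μl αl μk αk : Fin m → ℝ) : ℝ :=
  if ∀ i, μl i < μk i then conjRBF y μk αk else 0

/-!
Since `∂ᵢ P = t αᵢ (1 - 2 λᵢ) P`, every term of the Lie derivative of `P(·; μ_l, tα_l)` at `y`,
and every nonzero `H`-term, carries the factor `P(y; μ_l, tα_l)`; the remaining factors are at
most linear in `t`, because `|1 - 2λ| ≤ 1` and conjunctive logistic functions and RBFs lie in
`[0, 1]`. As `ρ(y; μ, α) ≤ exp (-|α (y - μ)|)`, we get `P(y; μ_l, tα_l) ≤ exp (-δ t)` with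
`δ = ∑ᵢ α_{li} |yᵢ - μ_{li}| > 0`, so the difference is `O(t e^{-δt}) = O(e^{-δt/2})`.
-/

lemma logisticFun_pos (y μ α : ℝ) : 0 < logisticFun y μ α := by
  unfold logisticFun; positivity

lemma logisticFun_lt_one (y μ α : ℝ) : logisticFun y μ α < 1 := by
  unfold logisticFun
  rw [div_lt_one (by positivity)]
  linarith [Real.exp_pos (-α * (y - μ))]

lemma abs_one_sub_two_mul_logisticFun_le_one (y μ α : ℝ) :
    |1 - 2 * logisticFun y μ α| ≤ 1 := by
  have := logisticFun_pos y μ α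
  have := logisticFun_lt_one y μ α
  rw [abs_le]; constructor <;> linarith

lemma rbfFun_nonneg (y μ α : ℝ) : 0 ≤ rbfFun y μ α := by
  unfold rbfFun; positivity

lemma rbfFun_le_exp_neg_abs (y μ α : ℝ) : rbfFun y μ α ≤ Real.exp (-|α * (y - μ)|) := by
  have hle : ∀ v : ℝ, Real.exp v / (1 + Real.exp v) ^ 2 ≤ Real.exp v := fun v =>
    div_le_self (Real.exp_pos v).le (one_le_pow₀ (by linarith [Real.exp_pos v]))
  -- `rbfFun` is even in `u = α * (y - μ)`
  have heven : rbfFun y μ α = Real.exp (α * (y - μ)) / (1 + Real.exp (α * (y - μ))) ^ 2 := by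
    unfold rbfFun
    rw [neg_mul, Real.exp_neg]
    field_simp
    ring
  rcases abs_cases (α * (y - μ)) with ⟨h, -⟩ | ⟨h, -⟩
  · rw [h, rbfFun, neg_mul]
    exact hle _
  · rw [h, neg_neg, heven]
    exact hle _

lemma rbfFun_le_one (y μ α : ℝ) : rbfFun y μ α ≤ 1 :=
  (rbfFun_le_exp_neg_abs y μ α).trans (Real.exp_le_one_iff.mpr (neg_nonpos.mpr (abs_nonneg _)))

lemma hasDerivAt_rbfFun (μ α x : ℝ) :
    HasDerivAt (rbfFun · μ α) (α * (1 - 2 * logisticFun x μ α) * rbfFun x μ α) x := by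
  have he : HasDerivAt (fun z => Real.exp (-α * (z - μ))) (Real.exp (-α * (x - μ)) * -α) x := by
    simpa using (((hasDerivAt_id x).sub_const μ).const_mul (-α)).exp
  have hsq : HasDerivAt (fun z => (1 + Real.exp (-α * (z - μ))) ^ 2)
      (2 * (1 + Real.exp (-α * (x - μ))) ^ 1 * (Real.exp (-α * (x - μ)) * -α)) x :=
    (he.const_add 1).pow 2
  refine (he.div hsq (by positivity)).congr_deriv ?_
  unfold rbfFun logisticFun
  field_simp
  ring

lemma conjRBF_nonneg {m : ℕ} (y μ α : Fin m → ℝ) : 0 ≤ conjRBF y μ α :=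
  Finset.prod_nonneg fun _ _ => rbfFun_nonneg _ _ _

lemma abs_conjRBF_le_one {m : ℕ} (y μ α : Fin m → ℝ) : |conjRBF y μ α| ≤ 1 := by
  rw [abs_of_nonneg (conjRBF_nonneg y μ α)]
  exact Finset.prod_le_one (fun i _ => rbfFun_nonneg _ _ _) (fun i _ => rbfFun_le_one _ _ _)

lemma abs_conjLog_le_one {m : ℕ} (y μ α : Fin m → ℝ) : |conjLog y μ α| ≤ 1 := by
  rw [conjLog, abs_of_nonneg (Finset.prod_nonneg fun i _ => (logisticFun_pos _ _ _).le)]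
  exact Finset.prod_le_one (fun i _ => (logisticFun_pos _ _ _).le)
    (fun i _ => (logisticFun_lt_one _ _ _).le)

lemma conjRBF_le_exp_neg_sum {m : ℕ} (y μ α : Fin m → ℝ) :
    conjRBF y μ α ≤ Real.exp (-∑ i, |α i * (y i - μ i)|) := by
  rw [← Finset.sum_neg_distrib, Real.exp_sum]
  exact Finset.prod_le_prod (fun i _ => rbfFun_nonneg _ _ _)
    (fun i _ => rbfFun_le_exp_neg_abs _ _ _)

lemma abs_decisionH_le {m : ℕ} (y μl αl μk αk : Fin m → ℝ) :
    |decisionH y μl αl μk αk| ≤ conjRBF y μk αk := by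
  unfold decisionH
  split_ifs
  · exact (abs_of_nonneg (conjRBF_nonneg y μk αk)).le
  · simpa using conjRBF_nonneg y μk αk

lemma fderiv_conjRBF_apply {m : ℕ} (y μ α v : Fin m → ℝ) :
    fderiv ℝ (fun z => conjRBF z μ α) y v
      = (∑ i, α i * (1 - 2 * logisticFun (y i) (μ i) (α i)) * v i) * conjRBF y μ α := by
  classical
  have h := HasFDerivAt.finsetProd (u := Finset.univ) fun i _ =>
    (hasDerivAt_rbfFun (μ i) (α i) (y i)).comp_hasFDerivAt y (hasFDerivAt_apply (𝕜 := ℝ) i y)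
  simp only [Function.comp_def] at h
  simp only [conjRBF]
  rw [h.fderiv, Finset.sum_mul]
  simp only [sum_apply, smul_apply,
    ContinuousLinearMap.proj_apply, smul_eq_mul]
  refine Finset.sum_congr rfl fun i _ => ?_
  rw [← Finset.mul_prod_erase Finset.univ _ (Finset.mem_univ i)]
  ring

lemma abs_sum_mul_le_sum_abs {ι : Type*} [Fintype ι] (a x : ι → ℝ) (hx : ∀ i, |x i| ≤ 1) :
    |∑ i, a i * x i| ≤ ∑ i, |a i| := by
  refine (Finset.abs_sum_le_sum_abs _ _).trans (Finset.sum_le_sum fun i _ => ?_)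
  rw [abs_mul]
  exact mul_le_of_le_one_right (abs_nonneg _) (hx i)

lemma abs_sum_mul_sub_sum_le {ι κ : Type*} [Fintype ι] [Fintype κ]
    (β σ F W : ι → ℝ) (w : ι → κ → ℝ) (H : κ → ℝ) (P : ℝ)
    (hβ : ∀ i, 0 ≤ β i) (hσ : ∀ i, |σ i| ≤ 1) (hF : ∀ i, |F i| ≤ W i)
    (hH : ∀ j, |H j| ≤ P) (hP : 0 ≤ P) :
    |(∑ i, β i * σ i * F i) * P - ∑ i, ∑ j, β i * w i j * σ i * H j|
      ≤ (∑ i, β i * (W i + ∑ j, |w i j|)) * P := by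
  have hfield : |(∑ i, β i * σ i * F i) * P| ≤ (∑ i, β i * W i) * P := by
    rw [abs_mul, abs_of_nonneg hP]
    refine mul_le_mul_of_nonneg_right ((Finset.abs_sum_le_sum_abs _ _).trans
      (Finset.sum_le_sum fun i _ => ?_)) hP
    rw [abs_mul, abs_mul, abs_of_nonneg (hβ i), mul_assoc]
    calc β i * (|σ i| * |F i|) ≤ β i * (1 * W i) :=
          mul_le_mul_of_nonneg_left (mul_le_mul (hσ i) (hF i) (abs_nonneg _) zero_le_one) (hβ i)
      _ = β i * W i := by ring
  have hdecision : |∑ i, ∑ j, β i * w i j * σ i * H j| ≤ (∑ i, β i * ∑ j, |w i j|) * P := by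
    simp only [Finset.sum_mul, Finset.mul_sum]
    refine (Finset.abs_sum_le_sum_abs _ _).trans (Finset.sum_le_sum fun i _ => ?_)
    refine (Finset.abs_sum_le_sum_abs _ _).trans (Finset.sum_le_sum fun j _ => ?_)
    rw [abs_mul, abs_mul, abs_mul, abs_of_nonneg (hβ i), mul_assoc]
    calc β i * |w i j| * (|σ i| * |H j|) ≤ β i * |w i j| * (1 * P) :=
          mul_le_mul_of_nonneg_left (mul_le_mul (hσ i) (hH j) (abs_nonneg _) zero_le_one)
            (mul_nonneg (hβ i) (abs_nonneg _))
      _ = β i * |w i j| * P := by ring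
  calc _ ≤ _ := abs_sub _ _
    _ ≤ _ := add_le_add hfield hdecision
    _ = _ := by simp only [mul_add, Finset.sum_add_distrib, add_mul]

lemma exists_mul_mul_exp_neg_le {K δ : ℝ} (hK : 0 ≤ K) (hδ : 0 < δ) :
    ∃ C c : ℝ, 0 < C ∧ 0 < c ∧ ∀ t : ℝ, 0 ≤ t → K * t * Real.exp (-(δ * t)) ≤ C * Real.exp (-c * t) := by
  refine ⟨(K + 1) * (2 / δ), δ / 2, by positivity, by positivity, fun t ht => ?_⟩
  have hsplit : t * Real.exp (-(δ * t))
      = 2 / δ * (δ / 2 * t * Real.exp (-(δ / 2 * t))) * Real.exp (-(δ / 2) * t) := by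
    have hhalf : Real.exp (-(δ * t)) = Real.exp (-(δ / 2 * t)) * Real.exp (-(δ / 2) * t) := by
      rw [← Real.exp_add]; ring_nf
    rw [hhalf]
    field_simp
  have hbump : δ / 2 * t * Real.exp (-(δ / 2 * t)) ≤ 1 :=
    (Real.mul_exp_neg_le_exp_neg_one _).trans (Real.exp_le_one_iff.mpr (by norm_num))
  calc K * t * Real.exp (-(δ * t)) = K * (t * Real.exp (-(δ * t))) := by ring
    _ ≤ (K + 1) * (2 / δ * 1 * Real.exp (-(δ / 2) * t)) := by
      rw [hsplit]; gcongr; linarith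
    _ = _ := by ring

theorem lie_deriv_conjRBF_exp_approx_general
    (m NL NR : ℕ) (hm : 0 < m)
    (wL : Fin m → Fin NL → ℝ) (wR : Fin m → Fin NR → ℝ)
    (μL : Fin NL → Fin m → ℝ) (μR : Fin NR → Fin m → ℝ)
    (αL : Fin NL → Fin m → ℝ) (αR : Fin NR → Fin m → ℝ)
    (hαR : ∀ k i, 0 < αR k i)
    (l : Fin NR)
    (y : Fin m → ℝ)
    (hyR : ∀ i k, y i ≠ μR k i) :
    ∃ C c : ℝ, 0 < C ∧ 0 < c ∧ ∀ t : ℝ, 1 ≤ t →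
      |fderiv ℝ (fun z : Fin m → ℝ => conjRBF z (μR l) (fun i => t * αR l i)) y
          (fun i => (∑ j, wL i j * conjLog y (μL j) (fun i' => t * αL j i'))
            + ∑ k, wR i k * conjRBF y (μR k) (fun i' => t * αR k i'))
        - ∑ i, ∑ j, t * αR l i * wL i j
            * (1 - 2 * logisticFun (y i) (μR l i) (t * αR l i))
            * decisionH y (μL j) (fun i' => t * αL j i') (μR l) (fun i' => t * αR l i')|
      ≤ C * Real.exp (-c * t) := by
  set δ := ∑ i, αR l i * |y i - μR l i|
  have hδ : 0 < δ := Finset.sum_pos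
    (fun i _ => mul_pos (hαR l i) (abs_pos.mpr (sub_ne_zero.mpr (hyR i l))))
    ⟨⟨0, hm⟩, Finset.mem_univ _⟩
  set W : Fin m → ℝ := fun i => ∑ j, |wL i j| + ∑ k, |wR i k|
  set K := ∑ i, αR l i * (W i + ∑ j, |wL i j|)
  have hK : 0 ≤ K := Finset.sum_nonneg fun i _ => mul_nonneg (hαR l i).le (by positivity)
  obtain ⟨C, c, hC, hc, hdecay⟩ := exists_mul_mul_exp_neg_le hK hδ
  refine ⟨C, c, hC, hc, fun t ht => ?_⟩
  have ht0 : 0 ≤ t := zero_le_one.trans ht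
  have hP : conjRBF y (μR l) (fun i => t * αR l i) ≤ Real.exp (-(δ * t)) := by
    refine (conjRBF_le_exp_neg_sum _ _ _).trans_eq ?_
    simp only [δ, Finset.sum_mul, abs_mul, abs_of_nonneg ht0, abs_of_pos (hαR l _)]
    ring_nf
  have hF : ∀ i, |(∑ j, wL i j * conjLog y (μL j) (fun i' => t * αL j i'))
      + ∑ k, wR i k * conjRBF y (μR k) (fun i' => t * αR k i')| ≤ W i := fun i =>
    (abs_add_le _ _).trans (add_le_add
      (abs_sum_mul_le_sum_abs _ _ fun _ => abs_conjLog_le_one _ _ _)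
      (abs_sum_mul_le_sum_abs _ _ fun _ => abs_conjRBF_le_one _ _ _))
  rw [fderiv_conjRBF_apply]
  calc _ ≤ (∑ i, t * αR l i * (W i + ∑ j, |wL i j|)) * conjRBF y (μR l) (fun i => t * αR l i) :=
        abs_sum_mul_sub_sum_le _ _ _ _ _ _ _ (fun i => mul_nonneg ht0 (hαR l i).le)
          (fun _ => abs_one_sub_two_mul_logisticFun_le_one _ _ _) hF
          (fun _ => abs_decisionH_le _ _ _ _ _) (conjRBF_nonneg _ _ _)
    _ = K * t * conjRBF y (μR l) (fun i => t * αR l i) := by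
        simp only [K, Finset.sum_mul, mul_assoc, mul_left_comm t]
    _ ≤ K * t * Real.exp (-(δ * t)) := by gcongr
    _ ≤ C * Real.exp (-c * t) := hdecay t ht0

theorem lie_deriv_conjRBF_exp_approx
    (m NL NR : ℕ) (hm : 0 < m) (hNL : 0 < NL) (hNR : 0 < NR)
    (wL : Fin m → Fin NL → ℝ) (wR : Fin m → Fin NR → ℝ)
    (μL : Fin NL → Fin m → ℝ) (μR : Fin NR → Fin m → ℝ)
    (αL : Fin NL → Fin m → ℝ) (αR : Fin NR → Fin m → ℝ)
    (hαL : ∀ j i, 0 < αL j i) (hαR : ∀ k i, 0 < αR k i)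
    (l : Fin NR)
    (hdistL : ∀ j : Fin NL, μL j ≠ μR l)
    (hdistR : ∀ k : Fin NR, k ≠ l → μR k ≠ μR l)
    (y : Fin m → ℝ)
    (hyL : ∀ i j, y i ≠ μL j i) (hyR : ∀ i k, y i ≠ μR k i) :
    ∃ C c : ℝ, 0 < C ∧ 0 < c ∧ ∀ t : ℝ, 1 ≤ t →
      |fderiv ℝ (fun z : Fin m → ℝ => conjRBF z (μR l) (fun i => t * αR l i)) y
          (fun i => (∑ j, wL i j * conjLog y (μL j) (fun i' => t * αL j i'))
            + ∑ k, wR i k * conjRBF y (μR k) (fun i' => t * αR k i'))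
        - ∑ i, ∑ j, t * αR l i * wL i j
            * (1 - 2 * logisticFun (y i) (μR l i) (t * αR l i))
            * decisionH y (μL j) (fun i' => t * αL j i') (μR l) (fun i' => t * αR l i')|
      ≤ C * Real.exp (-c * t) :=
  lie_deriv_conjRBF_exp_approx_general m NL NR hm wL wR μL μR αL αR hαR l y hyR
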